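/- Let K_a^α (a = 1,…,n) be smooth vector fields on U such that each lowered field K_{aα} = g_{αβ} K_a^β is a conformal Killing vector of g (with some factor Ω_a), and each K_a is tangent to the slices, i.e. K_a^0 = 0 on U (equivalently n_α K_a^α = 0). Define the Gram matrix 𝒢_{ab} = g_{αβ} K_a^α K_b^β. Then for all a, b: n^α ∂_α 𝒢_{ab} = 2 χ_{αβ} K_a^α K_b^β on U. -/

import Mathlib

open scoped BigOperators

noncomputable section
set_option linter.unusedSectionVars false
set_option maxHeartbeats 1000000

variable {ι : Type*} [Fintype ι] [DecidableEq ι]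

/-- Partial derivative of a scalar field in the coordinate direction `i`. -/
def pd (i : ι) (f : (ι → ℝ) → ℝ) (x : ι → ℝ) : ℝ :=
  fderiv ℝ f x (Pi.single i 1)

/-- Christoffel symbols `Γ^l_{μν}` of the metric `g`. -/
def christoffel (g : (ι → ℝ) → Matrix ι ι ℝ) (l μ ν : ι) (x : ι → ℝ) : ℝ :=
  (1 / 2) * ∑ ρ, (g x)⁻¹ l ρ *
    (pd μ (fun y => g y ρ ν) x + pd ν (fun y => g y ρ μ) x - pd ρ (fun y => g y μ ν) x)

/-- Covariant derivative `∇_a K_b` of a covector field. -/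
def covd1 (g : (ι → ℝ) → Matrix ι ι ℝ) (K : (ι → ℝ) → ι → ℝ) (a b : ι) (x : ι → ℝ) : ℝ :=
  pd a (fun y => K y b) x - ∑ l, christoffel g l a b x * K x l

/-- Covariant derivative `∇_a K_{bc}` of a symmetric 2-tensor field. -/
def covd2 (g : (ι → ℝ) → Matrix ι ι ℝ) (K : (ι → ℝ) → ι → ι → ℝ) (a b c : ι)
    (x : ι → ℝ) : ℝ :=
  pd a (fun y => K y b c) x - ∑ l, christoffel g l a b x * K x l c
    - ∑ l, christoffel g l a c x * K x b l

/-- `g` is a smooth pseudo-Riemannian metric on `U`. -/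
def IsMetricOn (U : Set (ι → ℝ)) (g : (ι → ℝ) → Matrix ι ι ℝ) : Prop :=
  (∀ i j, ContDiffOn ℝ (⊤ : ℕ∞) (fun x => g x i j) U) ∧
  (∀ x ∈ U, ∀ i j, g x i j = g x j i) ∧
  (∀ x ∈ U, IsUnit (g x).det)

/-- `K` is a conformal Killing covector field of `g` on `U` with factor `Ω`. -/
def IsCKV (U : Set (ι → ℝ)) (g : (ι → ℝ) → Matrix ι ι ℝ)
    (K : (ι → ℝ) → ι → ℝ) (Ω : (ι → ℝ) → ℝ) : Prop :=
  ∀ x ∈ U, ∀ a b, covd1 g K a b x + covd1 g K b a x = 2 * Ω x * g x a b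

/-- `K` is a conformal Killing tensor of `g` on `U` with factor `Ω`. -/
def IsCKT (U : Set (ι → ℝ)) (g : (ι → ℝ) → Matrix ι ι ℝ)
    (K : (ι → ℝ) → ι → ι → ℝ) (Ω : (ι → ℝ) → ι → ℝ) : Prop :=
  ∀ x ∈ U, ∀ a b c,
    covd2 g K a b c x + covd2 g K b c a x + covd2 g K c a b x =
      Ω x a * g x b c + Ω x b * g x c a + Ω x c * g x a b

variable {m : ℕ}

/-- The lapse function `φ = |g^{00}|^{-1/2}`. -/
def lapse (g : (Fin (m + 2) → ℝ) → Matrix (Fin (m + 2)) (Fin (m + 2)) ℝ)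
    (x : Fin (m + 2) → ℝ) : ℝ :=
  1 / Real.sqrt |(g x)⁻¹ 0 0|

/-- Unit normal covector `n_a = φ δ^0_a`. -/
def nCov (g : (Fin (m + 2) → ℝ) → Matrix (Fin (m + 2)) (Fin (m + 2)) ℝ)
    (x : Fin (m + 2) → ℝ) : Fin (m + 2) → ℝ :=
  fun a => if a = 0 then lapse g x else 0

/-- Unit normal vector `n^a = φ g^{a0}`. -/
def nCon (g : (Fin (m + 2) → ℝ) → Matrix (Fin (m + 2)) (Fin (m + 2)) ℝ)
    (x : Fin (m + 2) → ℝ) : Fin (m + 2) → ℝ :=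
  fun a => lapse g x * (g x)⁻¹ a 0

/-- Projector `h^a_b = δ^a_b − ε n^a n_b`. -/
def proj (g : (Fin (m + 2) → ℝ) → Matrix (Fin (m + 2)) (Fin (m + 2)) ℝ) (ε : ℝ)
    (x : Fin (m + 2) → ℝ) (a b : Fin (m + 2)) : ℝ :=
  (if a = b then (1 : ℝ) else 0) - ε * nCon g x a * nCov g x b

/-- Induced metric `h_{ab} = g_{ab} − ε n_a n_b`. -/
def hInd (g : (Fin (m + 2) → ℝ) → Matrix (Fin (m + 2)) (Fin (m + 2)) ℝ) (ε : ℝ)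
    (x : Fin (m + 2) → ℝ) (a b : Fin (m + 2)) : ℝ :=
  g x a b - ε * nCov g x a * nCov g x b

/-- Second fundamental form `χ_{ab} = h^l_a h^p_b ∇_l n_p`. -/
def sff (g : (Fin (m + 2) → ℝ) → Matrix (Fin (m + 2)) (Fin (m + 2)) ℝ) (ε : ℝ)
    (x : Fin (m + 2) → ℝ) (a b : Fin (m + 2)) : ℝ :=
  ∑ l, ∑ p, proj g ε x l a * proj g ε x p b * covd1 g (fun y => nCov g y) l p x

/-- Tangential derivative of a scalar field: `D_a f = h^l_a ∂_l f`. -/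
def Dscal (g : (Fin (m + 2) → ℝ) → Matrix (Fin (m + 2)) (Fin (m + 2)) ℝ) (ε : ℝ)
    (f : (Fin (m + 2) → ℝ) → ℝ) (a : Fin (m + 2)) (x : Fin (m + 2) → ℝ) : ℝ :=
  ∑ l, proj g ε x l a * pd l f x

/-- Adapted foliation by the slices `x^0 = const`:
`g^{00}` is nowhere zero on `U`, with constant sign `ε ∈ {+1, −1}`. -/
def AdaptedFoliation (U : Set (Fin (m + 2) → ℝ))
    (g : (Fin (m + 2) → ℝ) → Matrix (Fin (m + 2)) (Fin (m + 2)) ℝ) (ε : ℝ) : Prop :=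
  (ε = 1 ∨ ε = -1) ∧ ∀ x ∈ U, 0 < ε * (g x)⁻¹ 0 0


/-! ### Auxiliary lemmas -/

lemma pd_congr_on {U : Set (ι → ℝ)} (hU : IsOpen U) {x : ι → ℝ} (hx : x ∈ U)
    {f f' : (ι → ℝ) → ℝ} (h : ∀ y ∈ U, f y = f' y) (i : ι) : pd i f x = pd i f' x := by
  unfold pd
  congr 1
  exact Filter.EventuallyEq.fderiv_eq (Filter.eventually_of_mem (hU.mem_nhds hx) h)

lemma pd_const (i : ι) (c : ℝ) (x : ι → ℝ) : pd i (fun _ => c) x = 0 := by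
  simp [pd]

lemma pd_sum {κ : Type*} (s : Finset κ) (f : κ → (ι → ℝ) → ℝ) (x : ι → ℝ)
    (hf : ∀ k ∈ s, DifferentiableAt ℝ (f k) x) (i : ι) :
    pd i (fun y => ∑ k ∈ s, f k y) x = ∑ k ∈ s, pd i (f k) x := by
  unfold pd
  rw [fderiv_fun_sum hf]
  simp

lemma pd_mul {f f' : (ι → ℝ) → ℝ} {x : ι → ℝ} (hf : DifferentiableAt ℝ f x)
    (hf' : DifferentiableAt ℝ f' x) (i : ι) :
    pd i (fun y => f y * f' y) x = pd i f x * f' x + f x * pd i f' x := by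
  unfold pd
  rw [fderiv_fun_mul hf hf']
  simp
  ring

lemma pd_mul3 {f1 f2 f3 : (ι → ℝ) → ℝ} {x : ι → ℝ} (h1 : DifferentiableAt ℝ f1 x)
    (h2 : DifferentiableAt ℝ f2 x) (h3 : DifferentiableAt ℝ f3 x) (i : ι) :
    pd i (fun y => f1 y * f2 y * f3 y) x =
      pd i f1 x * f2 x * f3 x + f1 x * pd i f2 x * f3 x + f1 x * f2 x * pd i f3 x := by
  rw [pd_mul (f := fun y => f1 y * f2 y) (h1.mul h2) h3 i, pd_mul h1 h2 i]
  ring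

lemma sum_sym_eq (P Q : ι → ι → ℝ) (h : ∀ j k, P j k + P k j = Q j k + Q k j) :
    (∑ j, ∑ k, P j k) = ∑ j, ∑ k, Q j k := by
  have h2 : (∑ j, ∑ k, (P j k + P k j)) = ∑ j, ∑ k, (Q j k + Q k j) :=
    Finset.sum_congr rfl fun j _ => Finset.sum_congr rfl fun k _ => h j k
  simp only [Finset.sum_add_distrib] at h2
  have hP : (∑ j : ι, ∑ k : ι, P k j) = ∑ j, ∑ k, P j k := Finset.sum_comm
  have hQ : (∑ j : ι, ∑ k : ι, Q k j) = ∑ j, ∑ k, Q j k := Finset.sum_comm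
  rw [hP, hQ] at h2
  linarith

/-- The Christoffel symbols as an algebraic expression in pointwise data. -/
def Γ' (Gi : Matrix ι ι ℝ) (dG : ι → ι → ι → ℝ) (l μ ν : ι) : ℝ :=
  (1 / 2) * ∑ ρ, Gi l ρ * (dG μ ρ ν + dG ν ρ μ - dG ρ μ ν)

lemma christoffel_eq (g : (ι → ℝ) → Matrix ι ι ℝ) (x : ι → ℝ) (l μ ν : ι) :
    christoffel g l μ ν x = Γ' (g x)⁻¹ (fun i j k => pd i (fun y => g y j k) x) l μ ν := rfl

lemma gamma_symm (Gi : Matrix ι ι ℝ) (dG : ι → ι → ι → ℝ)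
    (hdG : ∀ i j k, dG i j k = dG i k j) (l i j : ι) :
    Γ' Gi dG l i j = Γ' Gi dG l j i := by
  unfold Γ'
  congr 1
  apply Finset.sum_congr rfl
  intro ρ _
  linear_combination (- Gi l ρ) * hdG ρ i j

lemma gamma_contract (Gm Gi : Matrix ι ι ℝ) (dG : ι → ι → ι → ℝ)
    (hGi : ∀ i j, Gi i j = Gi j i)
    (hinv : ∀ i j, (∑ k, Gi i k * Gm k j) = if i = j then 1 else 0)
    (v : ι → ℝ) (i j : ι) :
    (∑ l, Γ' Gi dG l i j * (∑ k, Gm l k * v k))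
      = (1/2) * ∑ k, (dG i k j + dG j k i - dG k i j) * v k := by
  calc (∑ l, Γ' Gi dG l i j * (∑ k, Gm l k * v k))
      = ∑ l, ∑ k, ∑ ρ, (1/2) * ((dG i ρ j + dG j ρ i - dG ρ i j) * v k) * (Gi ρ l * Gm l k) := by
        apply Finset.sum_congr rfl; intro l _
        rw [Finset.mul_sum]
        apply Finset.sum_congr rfl; intro k _
        unfold Γ'
        rw [Finset.mul_sum, Finset.sum_mul]
        apply Finset.sum_congr rfl; intro ρ _
        linear_combination (-(1/2) * (dG i ρ j + dG j ρ i - dG ρ i j) * Gm l k * v k) * hGi ρ l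
    _ = ∑ k, ∑ l, ∑ ρ, (1/2) * ((dG i ρ j + dG j ρ i - dG ρ i j) * v k) * (Gi ρ l * Gm l k) := by
        rw [Finset.sum_comm]
    _ = ∑ k, ∑ ρ, ∑ l, (1/2) * ((dG i ρ j + dG j ρ i - dG ρ i j) * v k) * (Gi ρ l * Gm l k) := by
        apply Finset.sum_congr rfl; intro k _
        rw [Finset.sum_comm]
    _ = ∑ ρ, ∑ k, ∑ l, (1/2) * ((dG i ρ j + dG j ρ i - dG ρ i j) * v k) * (Gi ρ l * Gm l k) := by
        rw [Finset.sum_comm]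
    _ = ∑ ρ, ∑ k, (1/2) * ((dG i ρ j + dG j ρ i - dG ρ i j) * v k) * (∑ l, Gi ρ l * Gm l k) := by
        apply Finset.sum_congr rfl; intro ρ _
        apply Finset.sum_congr rfl; intro k _
        rw [Finset.mul_sum]
    _ = ∑ ρ, ∑ k, (1/2) * ((dG i ρ j + dG j ρ i - dG ρ i j) * v k) * (if ρ = k then 1 else 0) := by
        apply Finset.sum_congr rfl; intro ρ _
        apply Finset.sum_congr rfl; intro k _
        rw [hinv]
    _ = ∑ ρ, (1/2) * ((dG i ρ j + dG j ρ i - dG ρ i j) * v ρ) := by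
        apply Finset.sum_congr rfl; intro ρ _
        simp [mul_ite]
    _ = (1/2) * ∑ k, (dG i k j + dG j k i - dG k i j) * v k := by
        rw [Finset.mul_sum]

lemma main_alg (z : ι) (Gm Gi : Matrix ι ι ℝ) (dG : ι → ι → ι → ℝ)
    (Ka Kb : ι → ℝ) (dKa dKb : ι → ι → ℝ) (dLa dLb : ι → ι → ℝ) (Ωa Ωb φ : ℝ)
    (hGm : ∀ i j, Gm i j = Gm j i)
    (hGi : ∀ i j, Gi i j = Gi j i)
    (hdG : ∀ i j k, dG i j k = dG i k j)
    (hinv : ∀ i j, (∑ k, Gi i k * Gm k j) = if i = j then 1 else 0)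
    (hKa0 : Ka z = 0) (hKb0 : Kb z = 0)
    (hdKa0 : ∀ i, dKa i z = 0) (hdKb0 : ∀ i, dKb i z = 0)
    (hdLa : ∀ i j, dLa i j = ∑ k, (dG i j k * Ka k + Gm j k * dKa i k))
    (hdLb : ∀ i j, dLb i j = ∑ k, (dG i j k * Kb k + Gm j k * dKb i k))
    (hCKVa : ∀ i j, (dLa i j - ∑ l, Γ' Gi dG l i j * (∑ k, Gm l k * Ka k))
        + (dLa j i - ∑ l, Γ' Gi dG l j i * (∑ k, Gm l k * Ka k)) = 2 * Ωa * Gm i j)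
    (hCKVb : ∀ i j, (dLb i j - ∑ l, Γ' Gi dG l i j * (∑ k, Gm l k * Kb k))
        + (dLb j i - ∑ l, Γ' Gi dG l j i * (∑ k, Gm l k * Kb k)) = 2 * Ωb * Gm i j) :
    (∑ i, (φ * Gi i z) *
        (∑ j, ∑ k, (dG i j k * Ka j * Kb k + Gm j k * (dKa i j * Kb k + Ka j * dKb i k))))
      = -(2 * φ) * ∑ l, ∑ p, Γ' Gi dG z l p * Ka l * Kb p := by
  have hGc := gamma_contract Gm Gi dG hGi hinv
  -- contraction of the normal with the metric
  have h3 : ∀ k, (∑ i, (φ * Gi i z) * Gm i k) = φ * (if z = k then 1 else 0) := by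
    intro k
    calc (∑ i, (φ * Gi i z) * Gm i k) = φ * ∑ i, Gi z i * Gm i k := by
          rw [Finset.mul_sum]
          apply Finset.sum_congr rfl; intro i _
          rw [hGi i z]; ring
      _ = φ * (if z = k then 1 else 0) := by rw [hinv]
  -- Step A: expressing the derivative of the Gram matrix via covariant derivatives
  have h2gen : ∀ (v w : ι → ℝ) (dv dw : ι → ι → ℝ) (dLv dLw : ι → ι → ℝ),
      (∀ i j, dLv i j = ∑ k, (dG i j k * v k + Gm j k * dv i k)) →
      (∀ i j, dLw i j = ∑ k, (dG i j k * w k + Gm j k * dw i k)) →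
      ∀ i, (∑ j, (dLv i j - ∑ l, Γ' Gi dG l i j * (∑ k, Gm l k * v k)) * w j)
          + (∑ j, (dLw i j - ∑ l, Γ' Gi dG l i j * (∑ k, Gm l k * w k)) * v j)
        = ∑ j, ∑ k, (dG i j k * v j * w k + Gm j k * (dv i j * w k + v j * dw i k)) := by
    intro v w dv dw dLv dLw hv hw i
    have ea : ∀ j, (dLv i j - ∑ l, Γ' Gi dG l i j * (∑ k, Gm l k * v k)) * w j
        = ∑ k, (((dG i j k * v k + Gm j k * dv i k)
            - (1/2) * ((dG i k j + dG j k i - dG k i j) * v k)) * w j) := by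
      intro j
      rw [hv, hGc v i j, Finset.mul_sum, ← Finset.sum_sub_distrib, Finset.sum_mul]
    have eb : ∀ j, (dLw i j - ∑ l, Γ' Gi dG l i j * (∑ k, Gm l k * w k)) * v j
        = ∑ k, (((dG i j k * w k + Gm j k * dw i k)
            - (1/2) * ((dG i k j + dG j k i - dG k i j) * w k)) * v j) := by
      intro j
      rw [hw, hGc w i j, Finset.mul_sum, ← Finset.sum_sub_distrib, Finset.sum_mul]
    calc (∑ j, (dLv i j - ∑ l, Γ' Gi dG l i j * (∑ k, Gm l k * v k)) * w j)
          + (∑ j, (dLw i j - ∑ l, Γ' Gi dG l i j * (∑ k, Gm l k * w k)) * v j)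
        = ∑ j, ∑ k, ((((dG i j k * v k + Gm j k * dv i k)
              - (1/2) * ((dG i k j + dG j k i - dG k i j) * v k)) * w j)
            + (((dG i j k * w k + Gm j k * dw i k)
              - (1/2) * ((dG i k j + dG j k i - dG k i j) * w k)) * v j)) := by
          rw [← Finset.sum_add_distrib]
          apply Finset.sum_congr rfl; intro j _
          rw [ea j, eb j, ← Finset.sum_add_distrib]
      _ = ∑ j, ∑ k, (dG i j k * v j * w k + Gm j k * (dv i j * w k + v j * dw i k)) := by
          apply sum_sym_eq
          intro j k
          linear_combination (-(v j * w k - v k * w j)/2) * hdG i j k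
            + ((v j * w k + v k * w j)/2) * hdG j i k
            + ((v j * w k + v k * w j)/2) * hdG k i j
            + (w j * dv i k - w k * dv i j) * hGm j k
  -- Step B: the normal contraction of the covariant derivative
  have h5gen : ∀ (v : ι → ℝ) (dv : ι → ι → ℝ) (dLv : ι → ι → ℝ),
      (∀ i j, dLv i j = ∑ k, (dG i j k * v k + Gm j k * dv i k)) →
      (∀ i, dv i z = 0) →
      ∀ j, (∑ i, (φ * Gi i z) * (dLv j i - ∑ l, Γ' Gi dG l j i * (∑ k, Gm l k * v k)))
        = φ * ∑ i, Γ' Gi dG z j i * v i := by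
    intro v dv dLv hv hdv0 j
    have sA : (∑ i, (φ * Gi i z) * dLv j i)
        = (∑ i, ∑ k, (φ * Gi i z) * (dG j i k * v k))
          + (∑ k, (∑ i, (φ * Gi i z) * Gm i k) * dv j k) := by
      calc (∑ i, (φ * Gi i z) * dLv j i)
          = ∑ i, ((∑ k, (φ * Gi i z) * (dG j i k * v k))
              + (∑ k, ((φ * Gi i z) * Gm i k) * dv j k)) := by
            apply Finset.sum_congr rfl; intro i _
            rw [hv, Finset.mul_sum, ← Finset.sum_add_distrib]
            apply Finset.sum_congr rfl; intro k _
            ring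
        _ = (∑ i, ∑ k, (φ * Gi i z) * (dG j i k * v k))
              + (∑ i, ∑ k, ((φ * Gi i z) * Gm i k) * dv j k) := Finset.sum_add_distrib
        _ = (∑ i, ∑ k, (φ * Gi i z) * (dG j i k * v k))
              + (∑ k, ∑ i, ((φ * Gi i z) * Gm i k) * dv j k) := by
            rw [Finset.sum_comm (f := fun i k => ((φ * Gi i z) * Gm i k) * dv j k)]
        _ = (∑ i, ∑ k, (φ * Gi i z) * (dG j i k * v k))
              + (∑ k, (∑ i, (φ * Gi i z) * Gm i k) * dv j k) := by
            congr 1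
            apply Finset.sum_congr rfl; intro k _
            rw [Finset.sum_mul]
    have sA2 : (∑ k, (∑ i, (φ * Gi i z) * Gm i k) * dv j k) = 0 := by
      calc (∑ k, (∑ i, (φ * Gi i z) * Gm i k) * dv j k)
          = ∑ k, (φ * (if z = k then 1 else 0)) * dv j k := by
            apply Finset.sum_congr rfl; intro k _
            rw [h3]
        _ = 0 := by simp [hdv0]
    have sB : (∑ i, (φ * Gi i z) * (∑ l, Γ' Gi dG l j i * (∑ k, Gm l k * v k)))
        = ∑ i, ∑ k, (φ * Gi i z) * ((1/2) * ((dG j k i + dG i k j - dG k j i) * v k)) := by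
      apply Finset.sum_congr rfl; intro i _
      rw [hGc v j i, Finset.mul_sum, Finset.mul_sum]
    have sR : (φ * ∑ i, Γ' Gi dG z j i * v i)
        = ∑ i, ∑ k, (φ * Gi i z) * ((1/2) * ((dG j i k + dG k i j - dG i j k) * v k)) := by
      calc (φ * ∑ i, Γ' Gi dG z j i * v i)
          = ∑ i, ∑ ρ, (1/2) * (φ * (Gi z ρ * (dG j ρ i + dG i ρ j - dG ρ j i)) * v i) := by
            rw [Finset.mul_sum]
            apply Finset.sum_congr rfl; intro i _
            unfold Γ'
            rw [Finset.mul_sum, Finset.sum_mul, Finset.mul_sum]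
            apply Finset.sum_congr rfl; intro ρ _
            ring
        _ = ∑ ρ, ∑ i, (1/2) * (φ * (Gi z ρ * (dG j ρ i + dG i ρ j - dG ρ j i)) * v i) := by
            rw [Finset.sum_comm]
        _ = ∑ i, ∑ k, (φ * Gi i z) * ((1/2) * ((dG j i k + dG k i j - dG i j k) * v k)) := by
            apply Finset.sum_congr rfl; intro i _
            apply Finset.sum_congr rfl; intro k _
            rw [hGi z i]
            ring
    calc (∑ i, (φ * Gi i z) * (dLv j i - ∑ l, Γ' Gi dG l j i * (∑ k, Gm l k * v k)))
        = (∑ i, (φ * Gi i z) * dLv j i)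
            - (∑ i, (φ * Gi i z) * (∑ l, Γ' Gi dG l j i * (∑ k, Gm l k * v k))) := by
          rw [← Finset.sum_sub_distrib]
          apply Finset.sum_congr rfl; intro i _
          ring
      _ = (∑ i, ∑ k, (φ * Gi i z) * (dG j i k * v k))
            - ∑ i, ∑ k, (φ * Gi i z) * ((1/2) * ((dG j k i + dG i k j - dG k j i) * v k)) := by
          rw [sA, sA2, sB]; ring
      _ = ∑ i, ∑ k, (φ * Gi i z) * ((1/2) * ((dG j i k + dG k i j - dG i j k) * v k)) := by
          rw [← Finset.sum_sub_distrib]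
          apply Finset.sum_congr rfl; intro i _
          rw [← Finset.sum_sub_distrib]
          apply Finset.sum_congr rfl; intro k _
          linear_combination ((φ * Gi i z) * v k / 2) * (hdG j i k)
            + ((φ * Gi i z) * v k / 2) * (hdG i j k)
            - ((φ * Gi i z) * v k / 2) * (hdG k i j)
      _ = φ * ∑ i, Γ' Gi dG z j i * v i := sR.symm
  -- Step C: one full contracted piece
  have piece : ∀ (v w : ι → ℝ) (dv : ι → ι → ℝ) (dLv : ι → ι → ℝ) (Ωv : ℝ),
      (∀ i j, dLv i j = ∑ k, (dG i j k * v k + Gm j k * dv i k)) →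
      w z = 0 → (∀ i, dv i z = 0) →
      (∀ i j, (dLv i j - ∑ l, Γ' Gi dG l i j * (∑ k, Gm l k * v k))
          + (dLv j i - ∑ l, Γ' Gi dG l j i * (∑ k, Gm l k * v k)) = 2 * Ωv * Gm i j) →
      (∑ i, ∑ j, (φ * Gi i z) * ((dLv i j - ∑ l, Γ' Gi dG l i j * (∑ k, Gm l k * v k)) * w j))
        = -(φ * ∑ j, ∑ i, Γ' Gi dG z j i * v i * w j) := by
    intro v w dv dLv Ωv hv hw0 hdv0 hCKV
    set Av : ι → ι → ℝ := fun i j => dLv i j - ∑ l, Γ' Gi dG l i j * (∑ k, Gm l k * v k)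
      with hAv
    have h5 : ∀ j, (∑ i, (φ * Gi i z) * Av j i) = φ * ∑ i, Γ' Gi dG z j i * v i := by
      intro j
      simpa [hAv] using h5gen v dv dLv hv hdv0 j
    have hCKV' : ∀ i j, Av i j + Av j i = 2 * Ωv * Gm i j := by
      intro i j
      simpa [hAv] using hCKV i j
    calc (∑ i, ∑ j, (φ * Gi i z) * (Av i j * w j))
        = ∑ i, ∑ j, ((2 * Ωv) * ((φ * Gi i z) * Gm i j * w j)
            - ((φ * Gi i z) * Av j i) * w j) := by
          apply Finset.sum_congr rfl; intro i _
          apply Finset.sum_congr rfl; intro j _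
          linear_combination ((φ * Gi i z) * w j) * hCKV' i j
      _ = (2 * Ωv) * (∑ j, (∑ i, (φ * Gi i z) * Gm i j) * w j)
            - ∑ j, (∑ i, (φ * Gi i z) * Av j i) * w j := by
          simp only [Finset.mul_sum, Finset.sum_mul, mul_sub, sub_mul,
            Finset.sum_sub_distrib]
          congr 1
          · rw [Finset.sum_comm]
          · rw [Finset.sum_comm]
      _ = (2 * Ωv) * (∑ j, (φ * (if z = j then 1 else 0)) * w j)
            - ∑ j, (φ * ∑ i, Γ' Gi dG z j i * v i) * w j := by
          congr 1
          · congr 1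
            apply Finset.sum_congr rfl; intro j _
            rw [h3]
          · apply Finset.sum_congr rfl; intro j _
            rw [h5]
      _ = -(φ * ∑ j, ∑ i, Γ' Gi dG z j i * v i * w j) := by
          have e0 : (∑ j, (φ * (if z = j then 1 else 0)) * w j) = 0 := by
            simp [hw0]
          have e1 : (∑ j, (φ * ∑ i, Γ' Gi dG z j i * v i) * w j)
              = φ * ∑ j, ∑ i, Γ' Gi dG z j i * v i * w j := by
            simp only [Finset.mul_sum, Finset.sum_mul]
            apply Finset.sum_congr rfl; intro j _
            apply Finset.sum_congr rfl; intro i _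
            ring
          rw [e0, e1]; ring
  calc (∑ i, (φ * Gi i z) *
        (∑ j, ∑ k, (dG i j k * Ka j * Kb k + Gm j k * (dKa i j * Kb k + Ka j * dKb i k))))
      = ∑ i, (φ * Gi i z) *
          ((∑ j, (dLa i j - ∑ l, Γ' Gi dG l i j * (∑ k, Gm l k * Ka k)) * Kb j)
            + (∑ j, (dLb i j - ∑ l, Γ' Gi dG l i j * (∑ k, Gm l k * Kb k)) * Ka j)) := by
        apply Finset.sum_congr rfl; intro i _
        rw [← h2gen Ka Kb dKa dKb dLa dLb hdLa hdLb i]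
    _ = (∑ i, ∑ j, (φ * Gi i z) * ((dLa i j - ∑ l, Γ' Gi dG l i j * (∑ k, Gm l k * Ka k)) * Kb j))
          + (∑ i, ∑ j, (φ * Gi i z) * ((dLb i j - ∑ l, Γ' Gi dG l i j * (∑ k, Gm l k * Kb k)) * Ka j)) := by
        simp only [mul_add, Finset.mul_sum, Finset.sum_add_distrib]
    _ = -(φ * ∑ j, ∑ i, Γ' Gi dG z j i * Ka i * Kb j)
          + -(φ * ∑ j, ∑ i, Γ' Gi dG z j i * Kb i * Ka j) := by
        rw [piece Ka Kb dKa dLa Ωa hdLa hKb0 hdKa0 hCKVa,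
            piece Kb Ka dKb dLb Ωb hdLb hKa0 hdKb0 hCKVb]
    _ = -(2 * φ) * ∑ l, ∑ p, Γ' Gi dG z l p * Ka l * Kb p := by
        have last1 : (∑ j, ∑ i, Γ' Gi dG z j i * Ka i * Kb j)
            = ∑ l, ∑ p, Γ' Gi dG z l p * Ka l * Kb p := by
          rw [Finset.sum_comm]
          apply Finset.sum_congr rfl; intro l _
          apply Finset.sum_congr rfl; intro p _
          rw [gamma_symm Gi dG hdG z p l]
        have last2 : (∑ j, ∑ i, Γ' Gi dG z j i * Kb i * Ka j)
            = ∑ l, ∑ p, Γ' Gi dG z l p * Ka l * Kb p := by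
          apply Finset.sum_congr rfl; intro l _
          apply Finset.sum_congr rfl; intro p _
          ring
        rw [last1, last2]; ring

/-- Proposition 6 of the paper: for conformal Killing vector fields
tangent to the slices, the normal derivative of the Gram matrix equals twice the
second fundamental form contracted with the Killing vectors. -/
theorem gram_matrix_normal_derivative
    {m n : ℕ} (U : Set (Fin (m + 2) → ℝ)) (hUo : IsOpen U) (hUc : IsConnected U)
    (g : (Fin (m + 2) → ℝ) → Matrix (Fin (m + 2)) (Fin (m + 2)) ℝ)
    (hg : IsMetricOn U g) (ε : ℝ) (hfol : AdaptedFoliation U g ε)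
    (K : Fin n → (Fin (m + 2) → ℝ) → Fin (m + 2) → ℝ)
    (hKsmooth : ∀ a b, ContDiffOn ℝ (⊤ : ℕ∞) (fun x => K a x b) U)
    (Ω : Fin n → (Fin (m + 2) → ℝ) → ℝ)
    -- each lowered field K_{aα} = g_{αβ} K_a^β is a conformal Killing vector
    (hK : ∀ a, IsCKV U g (fun x i => ∑ j, g x i j * K a x j) (Ω a))
    -- each K_a is tangent to the slices
    (htan : ∀ a, ∀ x ∈ U, K a x 0 = 0)
    -- the Gram matrix 𝒢_{ab} = g_{αβ} K_a^α K_b^β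
    (𝒢 : Fin n → Fin n → (Fin (m + 2) → ℝ) → ℝ)
    (h𝒢 : ∀ a b x, 𝒢 a b x = ∑ i, ∑ j, g x i j * K a x i * K b x j) :
    ∀ x ∈ U, ∀ a b,
      (∑ i, nCon g x i * pd i (𝒢 a b) x) =
        2 * ∑ i, ∑ j, sff g ε x i j * K a x i * K b x j := by
  intro x hx a b
  have hU : U ∈ nhds x := hUo.mem_nhds hx
  have hgd : ∀ i j, DifferentiableAt ℝ (fun y => g y i j) x := fun i j =>
    ((hg.1 i j).contDiffAt hU).differentiableAt (by simp)
  have hKd : ∀ c i, DifferentiableAt ℝ (fun y => K c y i) x := fun c i =>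
    ((hKsmooth c i).contDiffAt hU).differentiableAt (by simp)
  have hGm : ∀ i j, g x i j = g x j i := hg.2.1 x hx
  have hdet : IsUnit (g x).det := hg.2.2 x hx
  have hGi : ∀ i j, (g x)⁻¹ i j = (g x)⁻¹ j i := by
    have ht : Matrix.transpose (g x) = g x := Matrix.ext fun i j => hGm j i
    have h1 : Matrix.transpose (g x)⁻¹ = (g x)⁻¹ := by
      rw [Matrix.transpose_nonsing_inv, ht]
    intro i j
    calc (g x)⁻¹ i j = (Matrix.transpose (g x)⁻¹) j i := (Matrix.transpose_apply _ _ _).symm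
      _ = (g x)⁻¹ j i := by rw [h1]
  have hinv : ∀ i j, (∑ k, (g x)⁻¹ i k * g x k j) = if i = j then 1 else 0 := by
    intro i j
    have h1 : (g x)⁻¹ * g x = 1 := Matrix.nonsing_inv_mul (g x) hdet
    calc (∑ k, (g x)⁻¹ i k * g x k j) = ((g x)⁻¹ * g x) i j := (Matrix.mul_apply).symm
      _ = (1 : Matrix (Fin (m+2)) (Fin (m+2)) ℝ) i j := by rw [h1]
      _ = if i = j then 1 else 0 := Matrix.one_apply
  have hdGsym : ∀ i j k, pd i (fun y => g y j k) x = pd i (fun y => g y k j) x :=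
    fun i j k => pd_congr_on hUo hx (fun y hy => hg.2.1 y hy j k) i
  have hK0 : ∀ c, K c x 0 = 0 := fun c => htan c x hx
  have hdK0 : ∀ c i, pd i (fun y => K c y (0 : Fin (m+2))) x = 0 := fun c i =>
    (pd_congr_on hUo hx (fun y hy => htan c y hy) i).trans (pd_const i 0 x)
  have hdL : ∀ c i j, pd i (fun y => ∑ k, g y j k * K c y k) x
      = ∑ k, (pd i (fun y => g y j k) x * K c x k + g x j k * pd i (fun y => K c y k) x) := by
    intro c i j
    rw [pd_sum Finset.univ (fun k => fun y => g y j k * K c y k) x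
      (fun k _ => (hgd j k).mul (hKd c k)) i]
    apply Finset.sum_congr rfl; intro k _
    rw [pd_mul (hgd j k) (hKd c k) i]
  have hCKV : ∀ c : Fin n, ∀ i j,
      ((fun i j => pd i (fun y => ∑ k, g y j k * K c y k) x) i j
        - ∑ l, Γ' (g x)⁻¹ (fun i j k => pd i (fun y => g y j k) x) l i j * (∑ k, g x l k * K c x k))
      + ((fun i j => pd i (fun y => ∑ k, g y j k * K c y k) x) j i
        - ∑ l, Γ' (g x)⁻¹ (fun i j k => pd i (fun y => g y j k) x) l j i * (∑ k, g x l k * K c x k))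
      = 2 * Ω c x * g x i j := by
    intro c i j
    have h0 := hK c x hx i j
    simp only [covd1, christoffel_eq] at h0
    exact h0
  have KEY := main_alg (0 : Fin (m+2)) (g x) (g x)⁻¹
      (fun i j k => pd i (fun y => g y j k) x)
      (fun i => K a x i) (fun i => K b x i)
      (fun i j => pd i (fun y => K a y j) x) (fun i j => pd i (fun y => K b y j) x)
      (fun i j => pd i (fun y => ∑ k, g y j k * K a y k) x)
      (fun i j => pd i (fun y => ∑ k, g y j k * K b y k) x)
      (Ω a x) (Ω b x) (lapse g x)
      hGm hGi hdGsym hinv (hK0 a) (hK0 b) (fun i => hdK0 a i) (fun i => hdK0 b i)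
      (hdL a) (hdL b) (hCKV a) (hCKV b)
  have hL : ∀ i, pd i (𝒢 a b) x = ∑ j, ∑ k,
      (pd i (fun y => g y j k) x * K a x j * K b x k
        + g x j k * (pd i (fun y => K a y j) x * K b x k
          + K a x j * pd i (fun y => K b y k) x)) := by
    intro i
    have hfun : 𝒢 a b = fun y => ∑ j, ∑ k, g y j k * K a y j * K b y k :=
      funext fun y => h𝒢 a b y
    rw [hfun]
    rw [pd_sum Finset.univ (fun j => fun y => ∑ k, g y j k * K a y j * K b y k) x
      (fun j _ => DifferentiableAt.fun_sum fun k _ => ((hgd j k).mul (hKd a j)).mul (hKd b k)) i]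
    apply Finset.sum_congr rfl; intro j _
    rw [pd_sum Finset.univ (fun k => fun y => g y j k * K a y j * K b y k) x
      (fun k _ => ((hgd j k).mul (hKd a j)).mul (hKd b k)) i]
    apply Finset.sum_congr rfl; intro k _
    rw [pd_mul3 (hgd j k) (hKd a j) (hKd b k) i]
    ring
  have hLHS : (∑ i, nCon g x i * pd i (𝒢 a b) x)
      = ∑ i, (lapse g x * (g x)⁻¹ i 0) *
          (∑ j, ∑ k, (pd i (fun y => g y j k) x * K a x j * K b x k
            + g x j k * (pd i (fun y => K a y j) x * K b x k
              + K a x j * pd i (fun y => K b y k) x))) := by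
    apply Finset.sum_congr rfl; intro i _
    rw [hL i]
    rfl
  have hBc : ∀ l p, covd1 g (fun y => nCov g y) l p x
      = (if p = 0 then pd l (lapse g) x else 0)
        - lapse g x * Γ' (g x)⁻¹ (fun i j k => pd i (fun y => g y j k) x) 0 l p := by
    intro l p
    unfold covd1
    have e1 : pd l (fun y => nCov g y p) x = (if p = 0 then pd l (lapse g) x else 0) := by
      by_cases hp : p = 0
      · subst hp
        have e : (fun y => nCov g y 0) = fun y => lapse g y := by
          funext y; simp [nCov]
        rw [e]
        simp
      · have e : (fun y => nCov g y p) = fun _ => (0:ℝ) := by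
          funext y; simp [nCov, hp]
        rw [e, pd_const]
        simp [hp]
    have e2 : (∑ q, christoffel g q l p x * nCov g x q)
        = lapse g x * Γ' (g x)⁻¹ (fun i j k => pd i (fun y => g y j k) x) 0 l p := by
      simp only [christoffel_eq, nCov, mul_ite, mul_zero, mul_one]
      rw [Finset.sum_ite_eq' Finset.univ (0 : Fin (m+2))]
      simp [mul_comm]
    rw [e1, e2]
  have hproj : ∀ (c : Fin n) l, (∑ i, proj g ε x l i * K c x i) = K c x l := by
    intro c l
    calc (∑ i, proj g ε x l i * K c x i)
        = ∑ i, ((if l = i then (1:ℝ) else 0) * K c x i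
            - ε * nCon g x l * ((if i = 0 then lapse g x else 0) * K c x i)) := by
          apply Finset.sum_congr rfl; intro i _
          simp only [proj, nCov]
          ring
      _ = K c x l := by
          rw [Finset.sum_sub_distrib]
          simp [Finset.sum_ite_eq, hK0 c, mul_ite, ite_mul]
  have hRS : (∑ i, ∑ j, sff g ε x i j * K a x i * K b x j)
      = ∑ l, ∑ p, K a x l * (K b x p * covd1 g (fun y => nCov g y) l p x) := by
    calc (∑ i, ∑ j, sff g ε x i j * K a x i * K b x j)
        = ∑ i, ∑ j, ∑ l, ∑ p, (proj g ε x l i * K a x i)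
            * ((proj g ε x p j * K b x j) * covd1 g (fun y => nCov g y) l p x) := by
          apply Finset.sum_congr rfl; intro i _
          apply Finset.sum_congr rfl; intro j _
          simp only [sff, Finset.sum_mul]
          apply Finset.sum_congr rfl; intro l _
          apply Finset.sum_congr rfl; intro p _
          ring
      _ = ∑ i, ∑ l, ∑ j, ∑ p, (proj g ε x l i * K a x i)
            * ((proj g ε x p j * K b x j) * covd1 g (fun y => nCov g y) l p x) := by
          apply Finset.sum_congr rfl; intro i _
          rw [Finset.sum_comm]
      _ = ∑ l, ∑ i, ∑ j, ∑ p, (proj g ε x l i * K a x i)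
            * ((proj g ε x p j * K b x j) * covd1 g (fun y => nCov g y) l p x) := by
          rw [Finset.sum_comm]
      _ = ∑ l, ∑ i, ∑ p, ∑ j, (proj g ε x l i * K a x i)
            * ((proj g ε x p j * K b x j) * covd1 g (fun y => nCov g y) l p x) := by
          apply Finset.sum_congr rfl; intro l _
          apply Finset.sum_congr rfl; intro i _
          rw [Finset.sum_comm]
      _ = ∑ l, ∑ p, ∑ i, ∑ j, (proj g ε x l i * K a x i)
            * ((proj g ε x p j * K b x j) * covd1 g (fun y => nCov g y) l p x) := by
          apply Finset.sum_congr rfl; intro l _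
          rw [Finset.sum_comm]
      _ = ∑ l, ∑ p, K a x l * (K b x p * covd1 g (fun y => nCov g y) l p x) := by
          apply Finset.sum_congr rfl; intro l _
          apply Finset.sum_congr rfl; intro p _
          calc (∑ i, ∑ j, (proj g ε x l i * K a x i)
                * ((proj g ε x p j * K b x j) * covd1 g (fun y => nCov g y) l p x))
              = ∑ i, (proj g ε x l i * K a x i)
                  * ((∑ j, proj g ε x p j * K b x j) * covd1 g (fun y => nCov g y) l p x) := by
                apply Finset.sum_congr rfl; intro i _
                rw [← Finset.mul_sum, ← Finset.sum_mul]
            _ = (∑ i, proj g ε x l i * K a x i)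
                  * ((∑ j, proj g ε x p j * K b x j) * covd1 g (fun y => nCov g y) l p x) := by
                rw [← Finset.sum_mul]
            _ = K a x l * (K b x p * covd1 g (fun y => nCov g y) l p x) := by
                rw [hproj a l, hproj b p]
  have hRS2 : (∑ l, ∑ p, K a x l * (K b x p * covd1 g (fun y => nCov g y) l p x))
      = -(lapse g x) * ∑ l, ∑ p,
          Γ' (g x)⁻¹ (fun i j k => pd i (fun y => g y j k) x) 0 l p * K a x l * K b x p := by
    calc (∑ l, ∑ p, K a x l * (K b x p * covd1 g (fun y => nCov g y) l p x))
        = ∑ l, ∑ p, (K a x l * (K b x p * (if p = 0 then pd l (lapse g) x else 0))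
            - lapse g x * (Γ' (g x)⁻¹ (fun i j k => pd i (fun y => g y j k) x) 0 l p
              * K a x l * K b x p)) := by
          apply Finset.sum_congr rfl; intro l _
          apply Finset.sum_congr rfl; intro p _
          rw [hBc l p]
          ring
      _ = (∑ l, ∑ p, K a x l * (K b x p * (if p = 0 then pd l (lapse g) x else 0)))
            - ∑ l, ∑ p, lapse g x * (Γ' (g x)⁻¹ (fun i j k => pd i (fun y => g y j k) x) 0 l p
              * K a x l * K b x p) := by
          simp only [Finset.sum_sub_distrib]
      _ = 0 - lapse g x * ∑ l, ∑ p,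
            Γ' (g x)⁻¹ (fun i j k => pd i (fun y => g y j k) x) 0 l p * K a x l * K b x p := by
          congr 1
          · apply Finset.sum_eq_zero; intro l _
            simp [mul_ite, Finset.sum_ite_eq', hK0 b]
          · rw [Finset.mul_sum]
            apply Finset.sum_congr rfl; intro l _
            rw [Finset.mul_sum]
      _ = -(lapse g x) * ∑ l, ∑ p,
            Γ' (g x)⁻¹ (fun i j k => pd i (fun y => g y j k) x) 0 l p * K a x l * K b x p := by
          ring
  rw [hLHS, KEY, hRS, hRS2]
  ring

end
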